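/- arXiv:math/0405453 — 2 statements merged into one kernel-verified Lean document; each statement's English description precedes it below -/
import Mathlib

section
/- For any nonzero formal power series f ∈ K[[X_1,…,X_n]], any arc φ ∈ (t·K[[t]])^n, and any i ∈ ℕ, the minimum of ord(f ∘ θ) over all arcs θ with ord(θ − φ) > i satisfies: m_0(f) ≤ min_θ ord(f ∘ θ) ≤ m_0(f)·(i+1), where m_0(f) is the order (multiplicity) of f at the origin. -/
/-!
The lower bound: an arc has no constant term, so `t^|α|` divides `θ^α`, and `|α| ≥ m` whenever
`f_α ≠ 0`.

The upper bound: move along the line `θ_s = φ + s b t^(i+1)` with `s` an indeterminate. A monomial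
`s^d t^N` of `θ_s^α` satisfies `|α| + i d ≤ N`, and even `1 + (i+1) d ≤ N` once the pure
`(s b t^(i+1))^α` part is removed. Hence the coefficient of `t^(m(i+1))` in `f ∘ θ_s` is a
polynomial in `s` whose `s^m`-coefficient is `f_m(b)`, with `f_m` the initial form of `f`. As `K`
is infinite, choose `b` with `f_m(b) ≠ 0`, then `s` at which that polynomial does not vanish.
-/

open scoped Classical

noncomputable def deg {σ : Type} [Fintype σ] (α : σ →₀ ℕ) : ℕ := ∑ i, α i

noncomputable def expBox (σ : Type) [Fintype σ] [DecidableEq σ] (D : ℕ) : Finset (σ →₀ ℕ) :=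
  Finset.Iic (Finsupp.equivFunOnFinite.symm fun _ => D)

/-- Substitution of an `n`-tuple of power series with zero constant term
(an arc) into a multivariate formal power series. -/
noncomputable def arcSubst {K : Type} [Field K] {σ : Type} [Fintype σ] [DecidableEq σ]
    (ψ : σ → PowerSeries K) (f : MvPowerSeries σ K) : PowerSeries K :=
  PowerSeries.mk fun N => ∑ α ∈ expBox σ N,
    MvPowerSeries.coeff α f * PowerSeries.coeff N (∏ i, ψ i ^ α i)

/-- `t`-adic order of a formal power series, in `ℕ∞` (`ord 0 = ∞`). -/
noncomputable def pOrd {K : Type} [Field K] (g : PowerSeries K) : ℕ∞ :=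
  ⨅ (N : ℕ) (_ : PowerSeries.coeff N g ≠ 0), (N : ℕ∞)

/-- Order of the difference of two arcs: minimum over the coordinates of the
valuations of the differences. -/
noncomputable def aOrd {K : Type} [Field K] {n : ℕ} (φ ψ : Fin n → PowerSeries K) : ℕ∞ :=
  ⨅ j : Fin n, pOrd (φ j - ψ j)

open Polynomial in
/-- Series in `R[s][[t]]` all of whose monomials `s^d t^N` satisfy `a + b * d ≤ N`, i.e. of weight
at least `a` when `t` has weight `1` and `s` has weight `-b`. -/
def weightAtLeast (R : Type*) [CommSemiring R] (b a : ℕ) : AddSubmonoid (PowerSeries R[X]) where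
  carrier := {g | ∀ N d, N < a + b * d → (PowerSeries.coeff N g).coeff d = 0}
  zero_mem' := by simp
  add_mem' hg hh N d h := by simp [hg N d h, hh N d h]

namespace weightAtLeast

open Polynomial

variable {R : Type*} [CommSemiring R] {b a a' : ℕ} {g h : PowerSeries R[X]}

theorem antitone (hle : a' ≤ a) : weightAtLeast R b a ≤ weightAtLeast R b a' :=
  fun _ hg N d h => hg N d (by omega)

theorem monomial_mem {N d : ℕ} (c : R) (h : a + b * d ≤ N) :
    PowerSeries.monomial N (Polynomial.monomial d c) ∈ weightAtLeast R b a := by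
  intro N' d' hN'
  rw [PowerSeries.coeff_monomial]
  split_ifs with hN
  · rw [Polynomial.coeff_monomial, if_neg]
    rintro rfl
    omega
  · rfl

theorem one_mem : (1 : PowerSeries R[X]) ∈ weightAtLeast R b 0 := by
  simpa using monomial_mem (R := R) (b := b) (a := 0) (N := 0) (d := 0) 1 le_rfl

theorem mul_mem (hg : g ∈ weightAtLeast R b a) (hh : h ∈ weightAtLeast R b a') :
    g * h ∈ weightAtLeast R b (a + a') := by
  intro N d hN
  rw [PowerSeries.coeff_mul, Polynomial.finsetSum_coeff]
  refine Finset.sum_eq_zero fun p hp => ?_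
  rw [Polynomial.coeff_mul]
  refine Finset.sum_eq_zero fun q hq => ?_
  rw [Finset.HasAntidiagonal.mem_antidiagonal] at hp hq
  by_cases hp₁ : p.1 < a + b * q.1
  · rw [hg _ _ hp₁, zero_mul]
  · rw [hh _ _ (by subst hp hq; rw [mul_add] at hN; omega), mul_zero]

theorem pow_mem (hg : g ∈ weightAtLeast R b a) (k : ℕ) :
    g ^ k ∈ weightAtLeast R b (k * a) := by
  induction k with
  | zero => simpa using one_mem
  | succ k ih => simpa [pow_succ, add_mul] using mul_mem ih hg

theorem prod_mem {ι : Type*} (s : Finset ι) {g : ι → PowerSeries R[X]} {e : ι → ℕ}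
    (hg : ∀ j ∈ s, g j ∈ weightAtLeast R b (e j)) :
    ∏ j ∈ s, g j ∈ weightAtLeast R b (∑ j ∈ s, e j) := by
  induction s using Finset.cons_induction with
  | empty => simpa using one_mem
  | cons c s hc ih =>
    rw [Finset.prod_cons, Finset.sum_cons]
    exact mul_mem (hg c (Finset.mem_cons_self c s))
      (ih fun j hj => hg j (Finset.mem_cons_of_mem hj))

theorem map_C_mem {ψ : PowerSeries R} (hψ : PowerSeries.constantCoeff ψ = 0) :
    PowerSeries.map C ψ ∈ weightAtLeast R b 1 := by
  intro N d hN
  rw [PowerSeries.coeff_map, coeff_C]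
  split_ifs with hd
  · subst hd
    rw [show N = 0 by omega, PowerSeries.coeff_zero_eq_constantCoeff_apply, hψ]
  · rfl

theorem monomial_X_mem {N : ℕ} (h : a + b ≤ N) :
    PowerSeries.monomial N (X : R[X]) ∈ weightAtLeast R b a := by
  simpa [← monomial_one_one_eq_X] using monomial_mem (d := 1) (1 : R) (by simpa using h)

theorem C_C_mul_mem (c : R) (hg : g ∈ weightAtLeast R b a) :
    PowerSeries.C (C c) * g ∈ weightAtLeast R b a := by
  intro N d hN
  simp [PowerSeries.coeff_C_mul, hg N d hN]

end weightAtLeast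

namespace weightAtLeast

open Polynomial

variable {R : Type*} [CommRing R] {b a : ℕ}

theorem pow_sub_pow_mem {x y : PowerSeries R[X]} (hx : x ∈ weightAtLeast R b 0)
    (hy : y ∈ weightAtLeast R b 0) (hxy : x - y ∈ weightAtLeast R b a) (k : ℕ) :
    x ^ k - y ^ k ∈ weightAtLeast R b a := by
  rw [← geom_sum₂_mul]
  have hsum : ∑ l ∈ Finset.range k, x ^ l * y ^ (k - 1 - l) ∈ weightAtLeast R b 0 :=
    AddSubmonoid.sum_mem _ fun l _ => by
      simpa using mul_mem (pow_mem hx l) (pow_mem hy (k - 1 - l))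
  simpa using mul_mem hsum hxy

theorem prod_sub_prod_mem {ι : Type*} (s : Finset ι) {x y : ι → PowerSeries R[X]}
    (hx : ∀ j ∈ s, x j ∈ weightAtLeast R b 0) (hy : ∀ j ∈ s, y j ∈ weightAtLeast R b 0)
    (hxy : ∀ j ∈ s, x j - y j ∈ weightAtLeast R b a) :
    ∏ j ∈ s, x j - ∏ j ∈ s, y j ∈ weightAtLeast R b a := by
  induction s using Finset.cons_induction with
  | empty => simp
  | cons c s hc ih =>
    simp only [Finset.forall_mem_cons] at hx hy hxy
    rw [Finset.prod_cons, Finset.prod_cons,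
      show x c * ∏ j ∈ s, x j - y c * ∏ j ∈ s, y j
        = x c * (∏ j ∈ s, x j - ∏ j ∈ s, y j) + (x c - y c) * ∏ j ∈ s, y j by ring]
    have hys : ∏ j ∈ s, y j ∈ weightAtLeast R b 0 := by simpa using prod_mem s hy.2
    exact add_mem (by simpa using mul_mem hx.1 (ih hx.2 hy.2 hxy.2))
      (by simpa using mul_mem hxy.1 hys)

end weightAtLeast

section Arcs

variable {K : Type} [Field K] {σ : Type} [Fintype σ]

theorem pOrd_eq_order (g : PowerSeries K) : pOrd g = g.order := by
  refine le_antisymm ?_ (le_iInf₂ fun N hN => PowerSeries.order_le N hN)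
  by_cases hg : g = 0
  · simp [hg]
  · have h := PowerSeries.coeff_order hg
    calc pOrd g ≤ (g.order.toNat : ℕ∞) := iInf₂_le (g.order.toNat) h
      _ = g.order := ENat.natCast_toNat (PowerSeries.order_eq_top.not.mpr hg)

theorem mem_expBox_of_deg_le [DecidableEq σ] {α : σ →₀ ℕ} {D : ℕ} (h : deg α ≤ D) :
    α ∈ expBox σ D := by
  rw [expBox, Finset.mem_Iic, Finsupp.le_def]
  intro j
  simpa using (Finset.single_le_sum (fun k _ => Nat.zero_le (α k)) (Finset.mem_univ j)).trans h

theorem X_pow_deg_dvd_prod_pow {θ : σ → PowerSeries K}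
    (hθ : ∀ j, PowerSeries.constantCoeff (θ j) = 0) (α : σ →₀ ℕ) :
    PowerSeries.X ^ deg α ∣ ∏ j, θ j ^ α j := by
  rw [deg, ← Finset.prod_pow_eq_pow_sum]
  exact Finset.prod_dvd_prod_of_dvd _ _ fun j _ =>
    pow_dvd_pow_of_dvd (PowerSeries.X_dvd_iff.mpr (hθ j)) _

theorem coeff_arcSubst_eq_zero_of_lt [DecidableEq σ] {f : MvPowerSeries σ K} {m : ℕ}
    (hm : ∀ α, MvPowerSeries.coeff α f ≠ 0 → m ≤ deg α) {θ : σ → PowerSeries K}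
    (hθ : ∀ j, PowerSeries.constantCoeff (θ j) = 0) {N : ℕ} (hN : N < m) :
    PowerSeries.coeff N (arcSubst θ f) = 0 := by
  rw [arcSubst, PowerSeries.coeff_mk]
  refine Finset.sum_eq_zero fun α _ => ?_
  by_cases hα : MvPowerSeries.coeff α f = 0
  · rw [hα, zero_mul]
  · rw [PowerSeries.X_pow_dvd_iff.mp (X_pow_deg_dvd_prod_pow hθ α) N
      (hN.trans_le (hm α hα)), mul_zero]

open Polynomial in
theorem coeff_arcSubst_map_eval [DecidableEq σ] (Θ : σ → PowerSeries K[X])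
    (f : MvPowerSeries σ K) (s : K) (N : ℕ) :
    PowerSeries.coeff N (arcSubst (fun j => PowerSeries.map (evalRingHom s) (Θ j)) f) =
      (∑ α ∈ expBox σ N, C (MvPowerSeries.coeff α f) *
        PowerSeries.coeff N (∏ j, Θ j ^ α j)).eval s := by
  simp [arcSubst, eval_finsetSum, ← map_pow, ← map_prod, PowerSeries.coeff_map]

end Arcs

section ArcLine

open Polynomial

variable {K : Type} [Field K] {σ : Type}

/-- The arcs `φ + s • b t^(i+1)` as one arc over `K[s]`. -/
noncomputable def arcLine (φ : σ → PowerSeries K) (b : σ → K) (i : ℕ) (j : σ) :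
    PowerSeries K[X] :=
  PowerSeries.map C (φ j) + PowerSeries.C (C (b j)) * PowerSeries.monomial (i + 1) X

/-- The degree-`m` part of `f`: its initial form when `m` is the order of `f`. -/
noncomputable def initialForm [Fintype σ] (f : MvPowerSeries σ K) (m : ℕ) : MvPolynomial σ K :=
  MvPolynomial.homogeneousComponent m (MvPowerSeries.truncTotal (m + 1) f)

theorem coeff_initialForm [Fintype σ] (f : MvPowerSeries σ K) (m : ℕ) (α : σ →₀ ℕ) :
    (initialForm f m).coeff α = if deg α = m then MvPowerSeries.coeff α f else 0 := by
  rw [initialForm, MvPolynomial.coeff_homogeneousComponent, Finsupp.degree_eq_sum,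
    MvPowerSeries.coeff_truncTotal_eq_ite, Finsupp.degree_eq_sum]
  by_cases h : ∑ j, α j = m <;> simp [deg, h]

theorem map_eval_arcLine (φ : σ → PowerSeries K) (b : σ → K) (i : ℕ) (s : K) (j : σ) :
    PowerSeries.map (evalRingHom s) (arcLine φ b i j) =
      φ j + PowerSeries.monomial (i + 1) (b j * s) := by
  ext N
  by_cases hN : N = i + 1 <;>
    simp [arcLine, PowerSeries.coeff_map, PowerSeries.coeff_monomial, hN]

variable {φ : σ → PowerSeries K} (b : σ → K) (i : ℕ)

theorem arcLine_mem_weightAtLeast (hφ : ∀ j, PowerSeries.constantCoeff (φ j) = 0) (j : σ) :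
    arcLine φ b i j ∈ weightAtLeast K i 1 :=
  add_mem (weightAtLeast.map_C_mem (hφ j))
    (weightAtLeast.C_C_mul_mem _ (weightAtLeast.monomial_X_mem (by omega)))

theorem arcLine_mem_weightAtLeast_succ (hφ : ∀ j, PowerSeries.constantCoeff (φ j) = 0)
    (j : σ) : arcLine φ b i j ∈ weightAtLeast K (i + 1) 0 :=
  add_mem (weightAtLeast.antitone zero_le_one (weightAtLeast.map_C_mem (hφ j)))
    (weightAtLeast.C_C_mul_mem _ (weightAtLeast.monomial_X_mem (by omega)))

theorem coeff_prod_arcLine_of_lt [Fintype σ] (hφ : ∀ j, PowerSeries.constantCoeff (φ j) = 0)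
    {α : σ →₀ ℕ} {m : ℕ} (h : m < deg α) :
    (PowerSeries.coeff (m * (i + 1)) (∏ j, arcLine φ b i j ^ α j)).coeff m = 0 := by
  have hmem := weightAtLeast.prod_mem Finset.univ
    fun j _ => weightAtLeast.pow_mem (arcLine_mem_weightAtLeast b i hφ j) (α j)
  simp only [mul_one] at hmem
  exact hmem _ _ (by rw [← deg, mul_add, mul_one, mul_comm]; omega)

theorem coeff_prod_arcLine_of_eq [Fintype σ] (hφ : ∀ j, PowerSeries.constantCoeff (φ j) = 0)
    {α : σ →₀ ℕ} {m : ℕ} (h : deg α = m) :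
    (PowerSeries.coeff (m * (i + 1)) (∏ j, arcLine φ b i j ^ α j)).coeff m =
      ∏ j, b j ^ α j := by
  set z : PowerSeries K[X] := PowerSeries.monomial (i + 1) X
  have hz : z ∈ weightAtLeast K (i + 1) 0 := weightAtLeast.monomial_X_mem (by omega)
  have hdiff : ∏ j, arcLine φ b i j ^ α j - ∏ j, (PowerSeries.C (C (b j)) * z) ^ α j
      ∈ weightAtLeast K (i + 1) 1 :=
    weightAtLeast.prod_sub_prod_mem _
      (fun j _ => by
        simpa using weightAtLeast.pow_mem (arcLine_mem_weightAtLeast_succ b i hφ j) _)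
      (fun j _ => by simpa using weightAtLeast.pow_mem (weightAtLeast.C_C_mul_mem (b j) hz) _)
      (fun j _ => weightAtLeast.pow_sub_pow_mem (arcLine_mem_weightAtLeast_succ b i hφ j)
        (weightAtLeast.C_C_mul_mem (b j) hz)
        (by simpa only [arcLine, z, add_sub_cancel_right] using
          weightAtLeast.map_C_mem (hφ j)) _)
  have hmain : ∏ j, (PowerSeries.C (C (b j)) * z) ^ α j
      = PowerSeries.C (C (∏ j, b j ^ α j)) * PowerSeries.monomial (m * (i + 1)) (X ^ m) := by
    simp only [mul_pow, Finset.prod_mul_distrib, ← map_pow, ← map_prod,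
      Finset.prod_pow_eq_pow_sum]
    rw [← deg, h, PowerSeries.monomial_pow]
  rw [← sub_add_cancel (∏ j, arcLine φ b i j ^ α j) _, map_add, coeff_add,
    hdiff _ _ (by rw [Nat.mul_comm]; omega), hmain, PowerSeries.coeff_C_mul,
    PowerSeries.coeff_monomial_same, coeff_C_mul, coeff_X_pow_self, mul_one, zero_add]

end ArcLine

section UpperBound

open Polynomial

variable {K : Type} [Field K] {σ : Type} [Fintype σ]

theorem coeff_sum_prod_arcLine [DecidableEq σ] {f : MvPowerSeries σ K} {m : ℕ}
    (hm : ∀ α, MvPowerSeries.coeff α f ≠ 0 → m ≤ deg α) {φ : σ → PowerSeries K}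
    (hφ : ∀ j, PowerSeries.constantCoeff (φ j) = 0) (b : σ → K) (i : ℕ) :
    (∑ α ∈ expBox σ (m * (i + 1)), C (MvPowerSeries.coeff α f) *
        PowerSeries.coeff (m * (i + 1)) (∏ j, arcLine φ b i j ^ α j)).coeff m =
      MvPolynomial.eval b (initialForm f m) := by
  rw [finsetSum_coeff, MvPolynomial.eval_eq']
  symm
  refine Finset.sum_subset (fun α hα => mem_expBox_of_deg_le ?_) (fun α _ hα => ?_) |>.trans
    (Finset.sum_congr rfl fun α _ => ?_)
  · rw [MvPolynomial.mem_support_iff, coeff_initialForm] at hα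
    split_ifs at hα with h
    · exact h.le.trans (Nat.le_mul_of_pos_right m i.succ_pos)
    · exact absurd rfl hα
  · rw [MvPolynomial.notMem_support_iff.mp hα, zero_mul]
  · rw [coeff_C_mul, coeff_initialForm]
    split_ifs with h
    · rw [coeff_prod_arcLine_of_eq b i hφ h]
    · by_cases hα : MvPowerSeries.coeff α f = 0
      · rw [hα, zero_mul, zero_mul]
      · rw [coeff_prod_arcLine_of_lt b i hφ (lt_of_le_of_ne (hm α hα) (Ne.symm h)),
          zero_mul, mul_zero]

theorem exists_coeff_arcSubst_add_monomial_ne_zero [DecidableEq σ] [Infinite K]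
    {f : MvPowerSeries σ K} {m : ℕ}
    (hm₁ : ∃ α, deg α = m ∧ MvPowerSeries.coeff α f ≠ 0)
    (hm₂ : ∀ α, MvPowerSeries.coeff α f ≠ 0 → m ≤ deg α) {φ : σ → PowerSeries K}
    (hφ : ∀ j, PowerSeries.constantCoeff (φ j) = 0) (i : ℕ) :
    ∃ c : σ → K, PowerSeries.coeff (m * (i + 1))
      (arcSubst (fun j => φ j + PowerSeries.monomial (i + 1) (c j)) f) ≠ 0 := by
  obtain ⟨α₀, hdeg, hα₀⟩ := hm₁
  have hq : initialForm f m ≠ 0 := fun h => hα₀ <| by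
    simpa [h, hdeg, eq_comm] using coeff_initialForm f m α₀
  obtain ⟨b, hb⟩ : ∃ b, MvPolynomial.eval b (initialForm f m) ≠ 0 := by
    by_contra! h
    exact hq (MvPolynomial.funext fun x => by simp [h x])
  set P : K[X] := ∑ α ∈ expBox σ (m * (i + 1)), C (MvPowerSeries.coeff α f) *
    PowerSeries.coeff (m * (i + 1)) (∏ j, arcLine φ b i j ^ α j)
  have hP : P.coeff m = MvPolynomial.eval b (initialForm f m) :=
    coeff_sum_prod_arcLine hm₂ hφ b i
  obtain ⟨s, hs⟩ : ∃ s, P.eval s ≠ 0 := by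
    by_contra! h
    rw [← hP, Polynomial.funext (p := P) (q := 0) (by simpa using h), coeff_zero] at hb
    exact hb rfl
  refine ⟨fun j => b j * s, ?_⟩
  rwa [show (fun j => φ j + PowerSeries.monomial (i + 1) (b j * s)) =
    fun j => PowerSeries.map (evalRingHom s) (arcLine φ b i j) from
      funext fun j => (map_eval_arcLine φ b i s j).symm, coeff_arcSubst_map_eval]

end UpperBound

theorem lt_aOrd_add_monomial {K : Type} [Field K] {n : ℕ} (φ : Fin n → PowerSeries K)
    (c : Fin n → K) (i : ℕ) :
    (i : ℕ∞) < aOrd (fun j => φ j + PowerSeries.monomial (i + 1) (c j)) φ := by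
  simp only [aOrd, add_sub_cancel_left, pOrd_eq_order]
  refine lt_of_lt_of_le (ENat.natCast_lt_natCast.mpr i.lt_succ_self) (le_iInf fun j => ?_)
  exact PowerSeries.nat_le_order _ _ fun N hN => by
    rw [PowerSeries.coeff_monomial, if_neg hN.ne]

theorem ord_comp_arc_bounds_general {K : Type} [Field K] [Infinite K] {n : ℕ}
    (f : MvPowerSeries (Fin n) K) (m : ℕ)
    (hm₁ : ∃ α, deg α = m ∧ MvPowerSeries.coeff α f ≠ 0)
    (hm₂ : ∀ α, MvPowerSeries.coeff α f ≠ 0 → m ≤ deg α)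
    (φ : Fin n → PowerSeries K) (hφ : ∀ j, PowerSeries.constantCoeff (φ j) = 0)
    (i : ℕ) :
    (∀ θ : Fin n → PowerSeries K, (∀ j, PowerSeries.constantCoeff (θ j) = 0) →
      (i : ℕ∞) < aOrd θ φ → (m : ℕ∞) ≤ pOrd (arcSubst θ f)) ∧
    (∃ θ : Fin n → PowerSeries K, (∀ j, PowerSeries.constantCoeff (θ j) = 0) ∧
      (i : ℕ∞) < aOrd θ φ ∧ pOrd (arcSubst θ f) ≤ ((m * (i + 1) : ℕ) : ℕ∞)) := by
  refine ⟨fun θ hθ _ => ?_, ?_⟩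
  · rw [pOrd_eq_order]
    exact PowerSeries.nat_le_order _ _ fun N hN => coeff_arcSubst_eq_zero_of_lt hm₂ hθ hN
  · obtain ⟨c, hc⟩ := exists_coeff_arcSubst_add_monomial_ne_zero hm₁ hm₂ hφ i
    refine ⟨fun j => φ j + PowerSeries.monomial (i + 1) (c j), fun j => ?_,
      lt_aOrd_add_monomial φ c i, ?_⟩
    · rw [map_add, hφ j, ← PowerSeries.coeff_zero_eq_constantCoeff_apply,
        PowerSeries.coeff_monomial, if_neg (by omega), add_zero]
    · rw [pOrd_eq_order]
      exact PowerSeries.order_le _ hc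

theorem ord_comp_arc_bounds {K : Type} [Field K] [Infinite K] {n : ℕ}
    (f : MvPowerSeries (Fin n) K) (hf : f ≠ 0) (m : ℕ)
    (hm₁ : ∃ α, deg α = m ∧ MvPowerSeries.coeff α f ≠ 0)
    (hm₂ : ∀ α, MvPowerSeries.coeff α f ≠ 0 → m ≤ deg α)
    (φ : Fin n → PowerSeries K) (hφ : ∀ j, PowerSeries.constantCoeff (φ j) = 0)
    (i : ℕ) :
    (∀ θ : Fin n → PowerSeries K, (∀ j, PowerSeries.constantCoeff (θ j) = 0) →
      (i : ℕ∞) < aOrd θ φ → (m : ℕ∞) ≤ pOrd (arcSubst θ f)) ∧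
    (∃ θ : Fin n → PowerSeries K, (∀ j, PowerSeries.constantCoeff (θ j) = 0) ∧
      (i : ℕ∞) < aOrd θ φ ∧ pOrd (arcSubst θ f) ≤ ((m * (i + 1) : ℕ) : ℕ∞)) :=
  ord_comp_arc_bounds_general f m hm₁ hm₂ φ hφ i
end

section
/- Let f ∈ K[[X_1,…,X_n]] be nonzero of order m. Write the blow-up chart substitution f(x_1, x_1(a_2+x_2),…, x_1(a_n+x_n)) = x_1^m · g(x_1,…,x_n) for a point (1,a_2,…,a_n) ∈ K^n. Then g is a well-defined power series (i.e., x_1^m divides the substituted series) and the order of g at the origin is at most m. -/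
/-!
Split `f` into homogeneous parts `f_d`. The chart sends `f_d` to `x₀ ^ d * f_d(1, a + x')`, so
the substituted series is divisible by `x₀ ^ m`, and the quotient `g` restricted to `x₀ = 0` is
the polynomial `f_m(1, a + x')`. This polynomial is nonzero, because dehomogenization is
injective on forms of degree `m` and translation by `a` is an automorphism, and its total degree
is at most `m`; each of its monomials is a monomial of `g` of degree at most `m`.
-/

open scoped Classical

noncomputable def mySubst {K : Type} [Field K] {σ τ : Type} [Fintype σ] [DecidableEq σ]
    [Fintype τ] (s : σ → MvPowerSeries τ K) (f : MvPowerSeries σ K) : MvPowerSeries τ K :=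
  fun β => ∑ α ∈ expBox σ (deg β),
    MvPowerSeries.coeff α f * MvPowerSeries.coeff β (∏ i, s i ^ α i)

/-- The blow-up chart substitution of the origin of `K^{n+1}` at the point
`(1, a)` of the exceptional divisor: `x₁ ↦ x₁`, `x_j ↦ x₁·(a_j + x_j)`. -/
noncomputable def chartS {K : Type} [Field K] {n : ℕ} (a : Fin n → K) :
    Fin (n + 1) → MvPowerSeries (Fin (n + 1)) K := fun j =>
  Fin.cases (MvPowerSeries.X 0)
    (fun k => MvPowerSeries.X 0 *
      (MvPowerSeries.C (σ := Fin (n + 1)) (R := K) (a k) + MvPowerSeries.X k.succ)) j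

lemma Finsupp.tsub_single_self_eq_erase {σ : Type*} (β : σ →₀ ℕ) (i : σ) :
    β - Finsupp.single i (β i) = β.erase i := by
  ext j
  rcases eq_or_ne j i with rfl | hj
  · simp
  · simp [Finsupp.erase_ne hj, Finsupp.single_eq_of_ne hj]

section Degree

variable {σ : Type} [Fintype σ]

lemma deg_eq_degree (α : σ →₀ ℕ) : deg α = α.degree := (Finsupp.degree_eq_sum α).symm

lemma apply_le_deg (α : σ →₀ ℕ) (i : σ) : α i ≤ deg α :=
  Finset.single_le_sum (fun _ _ => Nat.zero_le _) (Finset.mem_univ i)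

lemma deg_eq_deg_erase_add (α : σ →₀ ℕ) (i : σ) : deg α = deg (α.erase i) + α i := by
  conv_lhs => rw [← Finsupp.single_add_erase i α]
  simp only [deg_eq_degree, map_add, Finsupp.degree_single, add_comm]

variable [DecidableEq σ]

lemma mem_expBox {α : σ →₀ ℕ} {D : ℕ} : α ∈ expBox σ D ↔ ∀ i, α i ≤ D := by
  simp [expBox, Finsupp.le_def]

noncomputable def degreeSlice (σ : Type) [Fintype σ] [DecidableEq σ] (d : ℕ) : Finset (σ →₀ ℕ) :=
  (expBox σ d).filter (deg · = d)

lemma mem_degreeSlice {α : σ →₀ ℕ} {d : ℕ} : α ∈ degreeSlice σ d ↔ deg α = d := by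
  rw [degreeSlice, Finset.mem_filter, mem_expBox, and_iff_right_iff_imp]
  rintro rfl
  exact apply_le_deg α

lemma filter_expBox_deg_eq {d D : ℕ} (h : d ≤ D) :
    (expBox σ D).filter (deg · = d) = degreeSlice σ d := by
  ext α
  rw [Finset.mem_filter, mem_degreeSlice, mem_expBox, and_iff_right_iff_imp]
  rintro rfl i
  exact (apply_le_deg α i).trans h

lemma erase_injOn_degreeSlice (i : σ) (d : ℕ) :
    Set.InjOn (Finsupp.erase i) (degreeSlice σ d : Set (σ →₀ ℕ)) := by
  intro α hα β hβ h
  have hi : α i = β i := by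
    rw [Finset.mem_coe, mem_degreeSlice, deg_eq_deg_erase_add α i] at hα
    rw [Finset.mem_coe, mem_degreeSlice, deg_eq_deg_erase_add β i, ← h] at hβ
    omega
  rw [← Finsupp.single_add_erase i α, ← Finsupp.single_add_erase i β, h, hi]

end Degree

namespace MvPolynomial

lemma apply_eq_zero_of_mem_supported {σ R : Type*} [CommSemiring R] {s : Set σ}
    {p : MvPolynomial σ R} (hp : p ∈ supported R s) {γ : σ →₀ ℕ} (hγ : coeff γ p ≠ 0)
    {i : σ} (hi : i ∉ s) : γ i = 0 := by
  by_contra h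
  exact hi (mem_supported.1 hp
    ((mem_vars_iff_mem_support i).2 ⟨γ, mem_support_iff.2 hγ, Finsupp.mem_support_iff.2 h⟩))

variable {σ R : Type*} [CommRing R]

noncomputable def translate (c : σ → R) : MvPolynomial σ R →ₐ[R] MvPolynomial σ R :=
  aeval fun i => C (c i) + X i

lemma translate_neg_comp_translate (c : σ → R) :
    (translate (-c)).comp (translate c) = AlgHom.id R _ := by
  ext i
  simp [translate]

lemma translate_injective (c : σ → R) : Function.Injective (translate c) :=
  Function.LeftInverse.injective (g := translate (-c))
    (AlgHom.congr_fun (translate_neg_comp_translate c))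

end MvPolynomial

section Chart

variable {K : Type} [Field K] {n : ℕ}

noncomputable def chartFactor (a : Fin n → K) (α : Fin (n + 1) →₀ ℕ) :
    MvPolynomial (Fin (n + 1)) K :=
  ∏ k : Fin n, (MvPolynomial.C (a k) + MvPolynomial.X k.succ) ^ α k.succ

lemma prod_chartS_pow (a : Fin n → K) (α : Fin (n + 1) →₀ ℕ) :
    ∏ i, chartS a i ^ α i =
      (MvPowerSeries.X 0 : MvPowerSeries (Fin (n + 1)) K) ^ deg α * chartFactor a α := by
  have hcoe : (chartFactor a α : MvPowerSeries (Fin (n + 1)) K) =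
      ∏ k : Fin n, (MvPowerSeries.C (a k) + MvPowerSeries.X k.succ) ^ α k.succ := by
    rw [← MvPolynomial.coeToMvPowerSeries.ringHom_apply, chartFactor, map_prod]
    simp
  simp only [hcoe, chartS, Fin.prod_univ_succ, Fin.cases_zero, Fin.cases_succ, mul_pow,
    Finset.prod_mul_distrib, Finset.prod_pow_eq_pow_sum, deg, Fin.sum_univ_succ, pow_add]
  ring

lemma chartFactor_mem_supported (a : Fin n → K) (α : Fin (n + 1) →₀ ℕ) :
    chartFactor a α ∈ MvPolynomial.supported K {i | i ≠ 0} :=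
  Subalgebra.prod_mem _ fun k _ => Subalgebra.pow_mem _
    (Subalgebra.add_mem _ (Subalgebra.algebraMap_mem _ (a k))
      (MvPolynomial.X_mem_supported.2 (Fin.succ_ne_zero k))) _

lemma totalDegree_chartFactor_le (a : Fin n → K) (α : Fin (n + 1) →₀ ℕ) :
    (chartFactor a α).totalDegree ≤ deg α := by
  have hlin (k : Fin n) :
      (MvPolynomial.C (a k) + MvPolynomial.X k.succ : MvPolynomial (Fin (n + 1)) K).totalDegree
        ≤ 1 :=
    (MvPolynomial.totalDegree_add _ _).trans (by simp)
  calc (chartFactor a α).totalDegree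
      ≤ ∑ k : Fin n, α k.succ * 1 :=
        (MvPolynomial.totalDegree_finsetProd _ _).trans <| Finset.sum_le_sum fun k _ =>
          (MvPolynomial.totalDegree_pow _ _).trans (Nat.mul_le_mul_left _ (hlin k))
    _ ≤ deg α := by simp [deg, Fin.sum_univ_succ]

lemma translate_monomial_erase_zero (a : Fin n → K) (α : Fin (n + 1) →₀ ℕ) (r : K) :
    MvPolynomial.translate (Fin.cons 0 a) (MvPolynomial.monomial (α.erase 0) r) =
      MvPolynomial.C r * chartFactor a α := by
  rw [MvPolynomial.translate, MvPolynomial.aeval_monomial,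
    Finsupp.prod_fintype _ _ fun _ => pow_zero _, Fin.prod_univ_succ, Finsupp.erase_same,
    pow_zero, one_mul, MvPolynomial.algebraMap_eq, chartFactor]
  simp only [Fin.cons_succ, Finsupp.erase_ne (Fin.succ_ne_zero _)]

lemma coeff_prod_chartS_pow (a : Fin n → K) (α β : Fin (n + 1) →₀ ℕ) :
    MvPowerSeries.coeff β (∏ i, chartS a i ^ α i) =
      if deg α = β 0 then MvPolynomial.coeff (β.erase 0) (chartFactor a α) else 0 := by
  rw [prod_chartS_pow, MvPowerSeries.X_pow_eq, MvPowerSeries.coeff_monomial_mul, one_mul,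
    MvPolynomial.coeff_coe]
  split_ifs with hle hdeg hdeg
  · rw [hdeg, Finsupp.tsub_single_self_eq_erase]
  · by_contra hc
    have h0 := MvPolynomial.apply_eq_zero_of_mem_supported (chartFactor_mem_supported a α) hc
      (i := 0) (by simp)
    have := Finsupp.single_le_iff.1 hle
    simp only [Finsupp.tsub_apply, Finsupp.single_eq_same] at h0
    omega
  · exact absurd (Finsupp.single_le_iff.2 hdeg.le) hle
  · rfl

lemma coeff_mySubst_chartS (a : Fin n → K) (f : MvPowerSeries (Fin (n + 1)) K)
    (β : Fin (n + 1) →₀ ℕ) :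
    MvPowerSeries.coeff β (mySubst (chartS a) f) =
      ∑ α ∈ degreeSlice (Fin (n + 1)) (β 0),
        MvPowerSeries.coeff α f * MvPolynomial.coeff (β.erase 0) (chartFactor a α) :=
  calc MvPowerSeries.coeff β (mySubst (chartS a) f)
      = ∑ α ∈ expBox (Fin (n + 1)) (deg β),
          MvPowerSeries.coeff α f * MvPowerSeries.coeff β (∏ i, chartS a i ^ α i) := rfl
    _ = ∑ α ∈ (expBox (Fin (n + 1)) (deg β)).filter (deg · = β 0),
          MvPowerSeries.coeff α f * MvPolynomial.coeff (β.erase 0) (chartFactor a α) := by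
        simp only [coeff_prod_chartS_pow, mul_ite, mul_zero, Finset.sum_filter]
    _ = _ := by rw [filter_expBox_deg_eq (apply_le_deg β 0)]

end Chart

section InitialForm

variable {σ R : Type} [Fintype σ] [DecidableEq σ] [CommSemiring R]

noncomputable def dehomogenizedForm (i : σ) (f : MvPowerSeries σ R) (d : ℕ) :
    MvPolynomial σ R :=
  ∑ α ∈ degreeSlice σ d, MvPolynomial.monomial (α.erase i) (MvPowerSeries.coeff α f)

lemma coeff_erase_dehomogenizedForm (i : σ) (f : MvPowerSeries σ R) {d : ℕ}
    {α : σ →₀ ℕ} (hα : α ∈ degreeSlice σ d) :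
    MvPolynomial.coeff (α.erase i) (dehomogenizedForm i f d) = MvPowerSeries.coeff α f := by
  rw [dehomogenizedForm, MvPolynomial.coeff_sum, Finset.sum_eq_single_of_mem α hα]
  · rw [MvPolynomial.coeff_monomial, if_pos rfl]
  · intro β hβ hne
    rw [MvPolynomial.coeff_monomial, if_neg fun h => hne (erase_injOn_degreeSlice i d hβ hα h)]

lemma dehomogenizedForm_ne_zero (i : σ) {f : MvPowerSeries σ R} {α : σ →₀ ℕ}
    (hα : MvPowerSeries.coeff α f ≠ 0) : dehomogenizedForm i f (deg α) ≠ 0 := fun h => hα <| by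
  rw [← coeff_erase_dehomogenizedForm i f (mem_degreeSlice.2 rfl), h, MvPolynomial.coeff_zero]

end InitialForm

section ExceptionalForm

variable {K : Type} [Field K] {n : ℕ} (a : Fin n → K) (f : MvPowerSeries (Fin (n + 1)) K)

/-- The strict transform restricted to the exceptional divisor `x₀ = 0`: the initial form of
`f` of degree `m`, evaluated at `(1, a + x')`. -/
noncomputable def exceptionalForm (m : ℕ) : MvPolynomial (Fin (n + 1)) K :=
  MvPolynomial.translate (Fin.cons 0 a) (dehomogenizedForm 0 f m)

lemma exceptionalForm_eq_sum (m : ℕ) :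
    exceptionalForm a f m = ∑ α ∈ degreeSlice (Fin (n + 1)) m,
      MvPolynomial.C (MvPowerSeries.coeff α f) * chartFactor a α := by
  simp only [exceptionalForm, dehomogenizedForm, map_sum, translate_monomial_erase_zero]

lemma exceptionalForm_ne_zero {α : Fin (n + 1) →₀ ℕ} (hα : MvPowerSeries.coeff α f ≠ 0) :
    exceptionalForm a f (deg α) ≠ 0 :=
  (map_ne_zero_iff _ (MvPolynomial.translate_injective _)).2 (dehomogenizedForm_ne_zero 0 hα)

lemma exceptionalForm_mem_supported (m : ℕ) :
    exceptionalForm a f m ∈ MvPolynomial.supported K {i | i ≠ 0} := by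
  rw [exceptionalForm_eq_sum]
  exact Subalgebra.sum_mem _ fun α _ =>
    Subalgebra.mul_mem _ (Subalgebra.algebraMap_mem _ _) (chartFactor_mem_supported a α)

lemma totalDegree_exceptionalForm_le (m : ℕ) : (exceptionalForm a f m).totalDegree ≤ m := by
  rw [exceptionalForm_eq_sum]
  refine (MvPolynomial.totalDegree_finsetSum _ _).trans (Finset.sup_le fun α hα => ?_)
  refine (MvPolynomial.totalDegree_mul _ _).trans ?_
  rw [MvPolynomial.totalDegree_C, zero_add, ← mem_degreeSlice.1 hα]
  exact totalDegree_chartFactor_le a α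

lemma coeff_mySubst_chartS_eq_zero_of_lt {m : ℕ}
    (hm : ∀ α, MvPowerSeries.coeff α f ≠ 0 → m ≤ deg α) {β : Fin (n + 1) →₀ ℕ} (hβ : β 0 < m) :
    MvPowerSeries.coeff β (mySubst (chartS a) f) = 0 := by
  rw [coeff_mySubst_chartS]
  refine Finset.sum_eq_zero fun α hα => ?_
  have hfα : MvPowerSeries.coeff α f = 0 := by
    by_contra h
    have := hm α h
    rw [mem_degreeSlice.1 hα] at this
    omega
  rw [hfα, zero_mul]

lemma coeff_mySubst_chartS_of_apply_zero_eq {m : ℕ} {β : Fin (n + 1) →₀ ℕ} (hβ : β 0 = m) :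
    MvPowerSeries.coeff β (mySubst (chartS a) f) =
      MvPolynomial.coeff (β.erase 0) (exceptionalForm a f m) := by
  simp only [coeff_mySubst_chartS, exceptionalForm_eq_sum, MvPolynomial.coeff_sum,
    MvPolynomial.coeff_C_mul, hβ]

end ExceptionalForm

theorem strict_transform_order_le_general {K : Type} [Field K] {n : ℕ}
    (f : MvPowerSeries (Fin (n + 1)) K) (m : ℕ)
    (hm₁ : ∃ α, deg α = m ∧ MvPowerSeries.coeff α f ≠ 0)
    (hm₂ : ∀ α, MvPowerSeries.coeff α f ≠ 0 → m ≤ deg α)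
    (a : Fin n → K) :
    ∃ g : MvPowerSeries (Fin (n + 1)) K,
      mySubst (chartS a) f = MvPowerSeries.X 0 ^ m * g ∧
      ∃ β, MvPowerSeries.coeff β g ≠ 0 ∧ deg β ≤ m := by
  obtain ⟨g, hg⟩ := MvPowerSeries.X_pow_dvd_iff.2 fun β hβ =>
    coeff_mySubst_chartS_eq_zero_of_lt a f hm₂ hβ
  obtain ⟨α, rfl, hα⟩ := hm₁
  obtain ⟨γ, hγ⟩ := MvPolynomial.support_nonempty.2 (exceptionalForm_ne_zero a f hα)
  have hγ0 : γ 0 = 0 := MvPolynomial.apply_eq_zero_of_mem_supported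
    (exceptionalForm_mem_supported a f _) (MvPolynomial.mem_support_iff.1 hγ) (by simp)
  refine ⟨g, hg, γ, ?_, ?_⟩
  · calc MvPowerSeries.coeff γ g
        = MvPowerSeries.coeff (γ + Finsupp.single 0 (deg α)) (mySubst (chartS a) f) := by
          rw [hg, MvPowerSeries.X_pow_eq, add_comm γ, MvPowerSeries.coeff_add_monomial_mul,
            one_mul]
      _ = MvPolynomial.coeff γ (exceptionalForm a f (deg α)) := by
          rw [coeff_mySubst_chartS_of_apply_zero_eq a f (m := deg α) (by simp [hγ0]),
            Finsupp.erase_add, Finsupp.erase_single, add_zero,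
            Finsupp.erase_of_notMem_support (by simpa using hγ0)]
      _ ≠ 0 := MvPolynomial.mem_support_iff.1 hγ
  · rw [deg_eq_degree]
    exact (MvPolynomial.le_totalDegree hγ).trans (totalDegree_exceptionalForm_le a f _)

theorem strict_transform_order_le {K : Type} [Field K] {n : ℕ}
    (f : MvPowerSeries (Fin (n + 1)) K) (hf : f ≠ 0) (m : ℕ)
    (hm₁ : ∃ α, deg α = m ∧ MvPowerSeries.coeff α f ≠ 0)
    (hm₂ : ∀ α, MvPowerSeries.coeff α f ≠ 0 → m ≤ deg α)
    (a : Fin n → K) :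
    ∃ g : MvPowerSeries (Fin (n + 1)) K,
      mySubst (chartS a) f = MvPowerSeries.X 0 ^ m * g ∧
      ∃ β, MvPowerSeries.coeff β g ≠ 0 ∧ deg β ≤ m :=
  strict_transform_order_le_general f m hm₁ hm₂ a
end
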